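/- In the setting of the stochastic ranking process with intensity measures $\rho_i^{(N)}$: for fixed $0\le t_0\le t$, the quantity $Y_A^{(N)}(t_0,t)=\frac1N\sum_{i=1}^N\mathbf{1}\{\nu_i^{(N)}((t-t_0,t])>0\}$ converges almost surely as $N\to\infty$ to $y_A(t_0,t)=1-\int_{\mathcal{M}} e^{-\rho((t-t_0,t])}\,\Lambda(d\rho)$, provided $\lambda_{t-t_0,t}^{(N)}:=\frac1N\sum_i \delta_{\rho_i^{(N)}((t-t_0,t])}$ converges weakly to $\int_{\mathcal{M}}\delta_{\rho((t-t_0,t])}\Lambda(d\rho)$. -/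

import Mathlib

/-!
Write `X_i = 1{ν_i((t-t0,t]) > 0}`, so that `E X_i = 1 - e^{-ρ_i((t-t0,t])}`. The centred
indicators form, for each `N`, an independent family of bounded variables, hence are
sub-Gaussian by Hoeffding's lemma; Hoeffding's inequality bounds
`P(|∑_{i<N} (X_i - E X_i)| ≥ N ε)` by `2 e^{-c N ε²}`, which is summable in `N`, so by
Borel–Cantelli the fluctuations are `o(N)` almost surely, even though the variables form a
triangular array. The averaged means `1 - (1/N) ∑ e^{-ρ_i((t-t0,t])}` converge to
`y_A(t0,t)` by the weak convergence hypothesis applied to the bounded continuous function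
`x ↦ e^{-|x|}`, which agrees with `x ↦ e^{-x}` on the nonnegative values `ρ((t-t0,t])`.
-/

open MeasureTheory Filter ProbabilityTheory Real Finset
open scoped NNReal BoundedContinuousFunction

namespace ProbabilityTheory.HasSubgaussianMGF

variable {Ω : Type*} [MeasurableSpace Ω] {μ : Measure Ω} {X : Ω → ℝ} {c : ℝ≥0}

lemma mono (h : HasSubgaussianMGF X c μ) {c' : ℝ≥0} (hc : c ≤ c') :
    HasSubgaussianMGF X c' μ where
  integrable_exp_mul := h.integrable_exp_mul
  mgf_le t := (h.mgf_le t).trans <| exp_le_exp.2 <| by gcongr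

lemma measureReal_abs_ge_le [IsFiniteMeasure μ] (h : HasSubgaussianMGF X c μ) {ε : ℝ}
    (hε : 0 ≤ ε) : μ.real {ω | ε ≤ |X ω|} ≤ 2 * exp (-ε ^ 2 / (2 * c)) := by
  have hsplit : {ω | ε ≤ |X ω|} ⊆ {ω | ε ≤ X ω} ∪ {ω | ε ≤ (-X) ω} :=
    fun ω (hω : ε ≤ |X ω|) => le_abs.1 hω
  calc μ.real {ω | ε ≤ |X ω|}
      ≤ μ.real {ω | ε ≤ X ω} + μ.real {ω | ε ≤ (-X) ω} :=
        (measureReal_mono hsplit).trans (measureReal_union_le _ _)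
    _ ≤ 2 * exp (-ε ^ 2 / (2 * c)) := by
        linarith [h.measure_ge_le hε, h.neg.measure_ge_le hε]

end ProbabilityTheory.HasSubgaussianMGF

section TriangularArray

variable {Ω : Type*} [MeasurableSpace Ω] {μ : Measure Ω} [IsProbabilityMeasure μ]

lemma ae_eventually_abs_sum_lt_of_hasSubgaussianMGF {Y : ℕ → ℕ → Ω → ℝ}
    (hindep : ∀ N, iIndepFun (fun i : Fin N => Y N i) μ) {c : ℝ≥0}
    (hY : ∀ N i, HasSubgaussianMGF (Y N i) c μ) {ε : ℝ} (hε : 0 < ε) :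
    ∀ᵐ ω ∂μ, ∀ᶠ N in atTop, |∑ i ∈ range N, Y N i ω| < N * ε := by
  -- enlarging the parameter to `c + 1 > 0` makes the Hoeffding bounds summable in `N`
  set a : ℝ := ε ^ 2 / (2 * (c + 1))
  have ha : 0 < a := by positivity
  have htail : ∀ N : ℕ,
      μ.real {ω | N * ε ≤ |∑ i ∈ range N, Y N i ω|} ≤ 2 * exp (-a * N) := by
    intro N
    have hsubG := HasSubgaussianMGF.sum_of_iIndepFun (hindep N) (s := univ)
      fun i _ => (hY N i).mono (le_self_add (b := 1))
    have hrange : (fun ω => ∑ i : Fin N, Y N i ω) = fun ω => ∑ i ∈ range N, Y N i ω :=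
      funext fun ω => Fin.sum_univ_eq_sum_range (fun i => Y N i ω) N
    simp only [sum_const, card_univ, Fintype.card_fin, nsmul_eq_mul, hrange] at hsubG
    have hexp : -(N * ε) ^ 2 / (2 * ((N * (c + 1) : ℝ≥0) : ℝ)) = -a * N := by
      push_cast
      rcases eq_or_ne (N : ℝ) 0 with hN | hN
      · simp [hN]
      · simp only [a]; field_simp
    simpa only [hexp] using hsubG.measureReal_abs_ge_le (by positivity : (0 : ℝ) ≤ N * ε)
  have hsummable : Summable fun N : ℕ => 2 * exp (-a * N) := by
    refine ((summable_geometric_of_lt_one (exp_nonneg _) (exp_lt_one_iff.2 (neg_neg_of_pos ha))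
      ).mul_left 2).congr fun N => ?_
    rw [← exp_nat_mul]; ring_nf
  have hfinite : ∑' N, μ {ω | N * ε ≤ |∑ i ∈ range N, Y N i ω|} ≠ ⊤ := by
    refine ne_top_of_le_ne_top ?_ (ENNReal.tsum_le_tsum fun N =>
      (ENNReal.le_ofReal_iff_toReal_le (measure_ne_top _ _) (by positivity)).2 (htail N))
    rw [← ENNReal.ofReal_tsum_of_nonneg (fun N => by positivity) hsummable]
    exact ENNReal.ofReal_ne_top
  filter_upwards [ae_eventually_notMem hfinite] with ω hω
  simpa only [Set.mem_ofPred_eq, not_le] using hω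

lemma ae_tendsto_sum_div_of_hasSubgaussianMGF {Y : ℕ → ℕ → Ω → ℝ}
    (hindep : ∀ N, iIndepFun (fun i : Fin N => Y N i) μ) {c : ℝ≥0}
    (hY : ∀ N i, HasSubgaussianMGF (Y N i) c μ) :
    ∀ᵐ ω ∂μ, Tendsto (fun N : ℕ => (∑ i ∈ range N, Y N i ω) / N) atTop (nhds 0) := by
  have hall := ae_all_iff.2 fun k : ℕ =>
    ae_eventually_abs_sum_lt_of_hasSubgaussianMGF hindep hY (ε := 1 / (k + 1)) (by positivity)
  filter_upwards [hall] with ω hω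
  refine NormedAddGroup.tendsto_nhds_zero.2 fun ε hε => ?_
  obtain ⟨k, hk⟩ := exists_nat_one_div_lt hε
  filter_upwards [hω k, eventually_gt_atTop 0] with N hlt hN
  have hN' : (0 : ℝ) < N := Nat.cast_pos.2 hN
  rw [norm_div, Real.norm_eq_abs, RCLike.norm_natCast, div_lt_iff₀ hN', mul_comm]
  exact hlt.trans_le (by gcongr)

lemma ae_tendsto_sum_sub_integral_div_of_mem_Icc {X : ℕ → ℕ → Ω → ℝ}
    (hmeas : ∀ N i, AEMeasurable (X N i) μ)
    (hindep : ∀ N, iIndepFun (fun i : Fin N => X N i) μ) {a b : ℝ}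
    (hbdd : ∀ N i, ∀ᵐ ω ∂μ, X N i ω ∈ Set.Icc a b) :
    ∀ᵐ ω ∂μ, Tendsto (fun N : ℕ => (∑ i ∈ range N, (X N i ω - μ[X N i])) / N)
      atTop (nhds 0) := by
  refine ae_tendsto_sum_div_of_hasSubgaussianMGF (fun N => ?_)
    fun N i => hasSubgaussianMGF_of_mem_Icc (hmeas N i) (hbdd N i)
  exact (hindep N).comp (fun (i : Fin N) (y : ℝ) => y - μ[X N i])
    fun i => measurable_id.sub_const _

end TriangularArray

lemma integral_ite_pos_eq_one_sub {Ω : Type*} [MeasurableSpace Ω] {μ : Measure Ω}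
    [IsProbabilityMeasure μ] {f : Ω → ℕ} (hf : Measurable f) :
    ∫ ω, (if 0 < f ω then (1 : ℝ) else 0) ∂μ = 1 - μ.real {ω | f ω = 0} := by
  have hzero : MeasurableSet {ω | f ω = 0} := hf (measurableSet_singleton 0)
  have hind : (fun ω => if 0 < f ω then (1 : ℝ) else 0) = {ω | f ω = 0}ᶜ.indicator 1 := by
    ext ω; simp [Set.indicator_apply, Nat.pos_iff_ne_zero]
  rw [hind, integral_indicator_one hzero.compl, probReal_compl_eq_one_sub hzero]

lemma tendsto_sum_exp_neg_div_of_forall_tendsto {α : Type*} [MeasurableSpace α] {ν : Measure α}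
    {x : ℕ → ℕ → ℝ} (hx : ∀ N i, 0 ≤ x N i) {g : α → ℝ} (hg : ∀ a, 0 ≤ g a)
    (hweak : ∀ f : ℝ →ᵇ ℝ,
      Tendsto (fun N : ℕ => (∑ i ∈ range N, f (x N i)) / N) atTop
        (nhds (∫ a, f (g a) ∂ν))) :
    Tendsto (fun N : ℕ => (∑ i ∈ range N, exp (-x N i)) / N) atTop
      (nhds (∫ a, exp (-g a) ∂ν)) := by
  have hbound : ∀ y : ℝ, ‖exp (-|y|)‖ ≤ 1 := fun y => by
    rw [Real.norm_eq_abs, abs_exp, exp_le_one_iff, neg_nonpos]; exact abs_nonneg y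
  set f : ℝ →ᵇ ℝ :=
    .ofNormedAddCommGroup (fun y => exp (-|y|)) (by fun_prop) 1 hbound
  have hf : ∀ y, 0 ≤ y → f y = exp (-y) := fun y hy =>
    show exp (-|y|) = exp (-y) by rw [abs_of_nonneg hy]
  simpa only [hf _ (hx _ _), hf _ (hg _)] using hweak f

theorem stmt7_general
    {Ω : Type*} [MeasurableSpace Ω] (μ : Measure Ω) [IsProbabilityMeasure μ]
    (t0 t : ℝ)
    (ρ : ℕ → ℕ → Measure ℝ)
    (n : ℕ → ℕ → Ω → ℕ)
    (hnmeas : ∀ N i, Measurable (n N i))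
    (hnindep : ∀ N, ProbabilityTheory.iIndepFun
      (fun i : Fin N => n N (i : ℕ)) μ)
    (hnlaw : ∀ N i, i < N →
      μ {ω | n N i ω = 0} =
        ENNReal.ofReal (Real.exp (-((ρ N i (Set.Ioc (t - t0) t)).toReal))))
    (Λ : Measure (Measure ℝ))
    (hweak : ∀ f : BoundedContinuousFunction ℝ ℝ,
      Tendsto (fun N : ℕ =>
          (∑ i ∈ Finset.range N, f ((ρ N i (Set.Ioc (t - t0) t)).toReal)) / N)
        atTop (nhds (∫ ρ', f ((ρ' (Set.Ioc (t - t0) t)).toReal) ∂Λ))) :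
    ∀ᵐ ω ∂μ, Tendsto
      (fun N : ℕ =>
        (∑ i ∈ Finset.range N, if 0 < n N i ω then (1 : ℝ) else 0) / N)
      atTop
      (nhds (1 - ∫ ρ', Real.exp (-((ρ' (Set.Ioc (t - t0) t)).toReal)) ∂Λ)) := by
  set ind : ℕ → ℝ := fun k => if 0 < k then 1 else 0
  set X : ℕ → ℕ → Ω → ℝ := fun N i => ind ∘ n N i
  have hfluct : ∀ᵐ ω ∂μ,
      Tendsto (fun N : ℕ => (∑ i ∈ range N, (X N i ω - μ[X N i])) / N) atTop (nhds 0) :=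
    ae_tendsto_sum_sub_integral_div_of_mem_Icc (a := 0) (b := 1)
      (fun N i => (measurable_from_top.comp (hnmeas N i)).aemeasurable)
      (fun N => (hnindep N).comp (fun _ => ind) fun _ => measurable_from_top)
      (fun N i => ae_of_all _ fun ω => by by_cases h : 0 < n N i ω <;> simp [X, ind, h])
  have hmean : ∀ N i, i < N → μ[X N i] = 1 - exp (-(ρ N i (Set.Ioc (t - t0) t)).toReal) :=
    fun N i hi => (integral_ite_pos_eq_one_sub (hnmeas N i)).trans <| by
      rw [measureReal_def, hnlaw N i hi, ENNReal.toReal_ofReal (exp_nonneg _)]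
  have hexp := tendsto_sum_exp_neg_div_of_forall_tendsto (fun _ _ => ENNReal.toReal_nonneg)
    (fun _ => ENNReal.toReal_nonneg) hweak
  have havg_mean : Tendsto (fun N : ℕ => (∑ i ∈ range N, μ[X N i]) / (N : ℝ)) atTop
      (nhds (1 - ∫ ρ', exp (-(ρ' (Set.Ioc (t - t0) t)).toReal) ∂Λ)) := by
    refine (tendsto_const_nhds.sub hexp).congr' ?_
    filter_upwards [eventually_ne_atTop 0] with N hN
    rw [sum_congr rfl fun i hi => hmean N i (mem_range.1 hi), sum_sub_distrib, sum_const,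
      card_range, nsmul_one, sub_div, div_self (Nat.cast_ne_zero.2 hN)]
  filter_upwards [hfluct] with ω hω
  refine ((hω.add havg_mean).congr fun N => ?_).trans (by rw [zero_add])
  rw [← add_div, ← sum_add_distrib]
  simp only [X, ind, Function.comp_apply, sub_add_cancel]

/-- for fixed `0 ≤ t0 ≤ t`, the fraction
`Y_A^{(N)}(t0,t) = (1/N) ∑ 1{ν_i^{(N)}((t-t0,t]) > 0}` of particles having jumped during
`(t-t0,t]` converges almost surely to `y_A(t0,t) = 1 - ∫_M e^{-ρ((t-t0,t])} Λ(dρ)`,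
provided the empirical distributions of the numbers `ρ_i^{(N)}((t-t0,t])` converge weakly
to the corresponding pushforward of `Λ`.  Here `n N i` is the number of points of the
Poisson random measure `ν_i^{(N)}` in `(t-t0,t]`, so `P[n N i = 0] = e^{-ρ_i^{(N)}((t-t0,t])}`. -/
theorem stmt7
    {Ω : Type*} [MeasurableSpace Ω] (μ : Measure Ω) [IsProbabilityMeasure μ]
    (t0 t : ℝ) (ht0 : 0 ≤ t0) (ht : t0 ≤ t)
    (ρ : ℕ → ℕ → Measure ℝ)
    (hρfin : ∀ N i, ρ N i (Set.Ioc (t - t0) t) ≠ ⊤)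
    (hρcont : ∀ N i x, ρ N i {x} = 0)
    (n : ℕ → ℕ → Ω → ℕ)
    (hnmeas : ∀ N i, Measurable (n N i))
    (hnindep : ∀ N, ProbabilityTheory.iIndepFun
      (fun i : Fin N => n N (i : ℕ)) μ)
    (hnlaw : ∀ N i, i < N →
      μ {ω | n N i ω = 0} =
        ENNReal.ofReal (Real.exp (-((ρ N i (Set.Ioc (t - t0) t)).toReal))))
    (Λ : Measure (Measure ℝ)) [IsProbabilityMeasure Λ]
    (hweak : ∀ f : BoundedContinuousFunction ℝ ℝ,
      Tendsto (fun N : ℕ =>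
          (∑ i ∈ Finset.range N, f ((ρ N i (Set.Ioc (t - t0) t)).toReal)) / N)
        atTop (nhds (∫ ρ', f ((ρ' (Set.Ioc (t - t0) t)).toReal) ∂Λ))) :
    ∀ᵐ ω ∂μ, Tendsto
      (fun N : ℕ =>
        (∑ i ∈ Finset.range N, if 0 < n N i ω then (1 : ℝ) else 0) / N)
      atTop
      (nhds (1 - ∫ ρ', Real.exp (-((ρ' (Set.Ioc (t - t0) t)).toReal)) ∂Λ)) :=
  stmt7_general μ t0 t ρ n hnmeas hnindep hnlaw Λ hweak
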